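/- arXiv:2602.16207 — 3 statements merged into one kernel-verified Lean document; each statement's English description precedes it below -/
import Mathlib

section
/- Assume that for every k with 1 ≤ k ≤ n one has Σ_{j=1}^ℓ g_{h_j} η_j α_k^{t−1+t_j} = g_t α_k^t. Then every codeword c = (c_1, …, c_n) of the multi-twisted Goppa code Γ(L, g, 𝕥, 𝕙, η) satisfies Σ_{i=1}^n c_i = 0; consequently the expurgated code Γ̃(L, g, 𝕥, 𝕙, η) := {c ∈ Γ(L, g, 𝕥, 𝕙, η) : Σ_{i=1}^n c_i = 0} coincides with Γ(L, g, 𝕥, 𝕙, η). -/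
/-! Modulo `g`, `(z - a)⁻¹ = -g(a)⁻¹ Σ_{h<t} a^h g⟨h⟩`, so the syndrome of a codeword `c` is the
class of `Σ_h w_h g⟨h⟩` for explicit coefficients `w_h`. This polynomial has degree `< t` and is
divisible by `g`, hence vanishes; as `g⟨h⟩` has degree `t - 1 - h` and leading coefficient `g_t`,
the `g⟨h⟩` with `h < t` are linearly independent and all `w_h` vanish. But pairing `w` with the
coefficients of `g` gives `Σ_h g_h w_h = -Σ_i c_i`: the untwisted part contributes
`-Σ_i c_i (g(α_i) - g_t α_i^t) / g(α_i)`, and the hypothesis turns the twists into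
`-Σ_i c_i g_t α_i^t / g(α_i)`. -/

open Polynomial

attribute [local instance] Classical.propDecidable

/-- The multi-twisted Goppa code `Γ(L, g, 𝕥, 𝕙, η)` (see paper), with `ℓ = L + 1 ≥ 1`
twists, defined via the syndrome condition in the quotient ring `F[z]/⟨g⟩`. -/
noncomputable def MTGoppa {F : Type*} [Field F] (K : Subfield F) {n : ℕ}
    (α : Fin n → F) (g : F[X]) (t : ℕ) {L : ℕ} (tw hk : Fin (L + 1) → ℕ)
    (η : Fin (L + 1) → F) : Set (Fin n → F) :=
  {c | (∀ i, c i ∈ K) ∧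
    ∑ i, (Ideal.Quotient.mk (Ideal.span {g})) (C (c i)) *
      (Ring.inverse ((Ideal.Quotient.mk (Ideal.span {g})) (X - C (α i))) -
        (Ideal.Quotient.mk (Ideal.span {g}))
          (∑ j, C (η j * α i ^ (t - 1 + tw j) / g.eval (α i)) *
            (g /ₘ X ^ (hk j + 1)))) = 0}

open Finset

namespace Polynomial

section CommRing

variable {R : Type*} [CommRing R]

lemma coeff_divByMonic_X_pow (p : R[X]) (m k : ℕ) : (p /ₘ X ^ m).coeff k = p.coeff (k + m) := by
  nontriviality R
  conv_rhs => rw [← p.modByMonic_add_div (X ^ m)]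
  have hmod : (p %ₘ X ^ m).degree < (k + m : ℕ) :=
    (degree_modByMonic_lt p (monic_X_pow m)).trans_le
      ((degree_X_pow_le m).trans (by exact_mod_cast Nat.le_add_left m k))
  rw [coeff_add, coeff_X_pow_mul, coeff_eq_zero_of_degree_lt hmod, zero_add]

lemma X_mul_divByMonic_X_pow_succ (p : R[X]) (h : ℕ) :
    X * (p /ₘ X ^ (h + 1)) = p /ₘ X ^ h - C (p.coeff h) := by
  ext (_ | k)
  · simp [coeff_divByMonic_X_pow]
  · simp only [coeff_X_mul, coeff_divByMonic_X_pow, coeff_sub, coeff_C_succ, sub_zero]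
    congr 1
    omega

lemma divByMonic_X_pow_natDegree (p : R[X]) : p /ₘ X ^ p.natDegree = C p.leadingCoeff := by
  ext (_ | k)
  · rw [coeff_divByMonic_X_pow, coeff_C_zero, zero_add]; rfl
  · rw [coeff_divByMonic_X_pow, coeff_C_succ, coeff_eq_zero_of_natDegree_lt (by omega)]

lemma X_sub_C_mul_sum_divByMonic_X_pow (p : R[X]) (a : R) :
    (X - C a) * ∑ h ∈ range p.natDegree, C (a ^ h) * (p /ₘ X ^ (h + 1)) = p - C (p.eval a) := by
  have step (h : ℕ) : (X - C a) * (C (a ^ h) * (p /ₘ X ^ (h + 1))) =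
      (C (a ^ h) * (p /ₘ X ^ h) - C (a ^ (h + 1)) * (p /ₘ X ^ (h + 1))) -
        C (p.coeff h * a ^ h) := by
    simp only [C_mul, C_pow]
    linear_combination C a ^ h * X_mul_divByMonic_X_pow_succ p h
  rw [mul_sum, sum_congr rfl fun h _ => step h, sum_sub_distrib, sum_range_sub', ← map_sum,
    pow_zero, C_1, one_mul, pow_zero, divByMonic_one, divByMonic_X_pow_natDegree,
    eval_eq_sum_range, sum_range_succ, map_add, C_mul, leadingCoeff]
  ring

lemma linearIndepOn_divByMonic_X_pow_succ [NoZeroDivisors R] {p : R[X]} (hp : p ≠ 0) :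
    LinearIndepOn R (fun h => p /ₘ X ^ (h + 1)) (Set.Iio p.natDegree) := by
  rw [linearIndepOn_iff]
  intro l hl hcomb
  by_contra hne
  have hsupp : l.support.Nonempty := Finsupp.support_nonempty_iff.2 hne
  set m := l.support.min' hsupp
  have hm : m < p.natDegree := hl (l.support.min'_mem hsupp)
  -- `p /ₘ X ^ (h + 1)` has degree `deg p - 1 - h`, so only `h = m` reaches this coefficient
  have hcoeff := congrArg (coeff · (p.natDegree - 1 - m)) hcomb
  simp only [Finsupp.linearCombination_apply, Finsupp.sum, finsetSum_coeff, coeff_smul,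
    coeff_divByMonic_X_pow, smul_eq_mul, coeff_zero] at hcoeff
  rw [sum_eq_single_of_mem m (l.support.min'_mem hsupp) fun h hh hne => ?_] at hcoeff
  · rw [show p.natDegree - 1 - m + (m + 1) = p.natDegree by omega] at hcoeff
    exact mul_ne_zero (Finsupp.mem_support_iff.1 (l.support.min'_mem hsupp))
      (leadingCoeff_ne_zero.2 hp) hcoeff
  · have : m < h := lt_of_le_of_ne (l.support.min'_le h hh) (Ne.symm hne)
    rw [coeff_eq_zero_of_natDegree_lt (by omega), mul_zero]

lemma linearCombination_divByMonic_X_pow_succ_mem_degreeLT (p : R[X]) (l : ℕ →₀ R) :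
    Finsupp.linearCombination R (fun h => p /ₘ X ^ (h + 1)) l ∈ degreeLT R p.natDegree := by
  refine Submodule.sum_mem _ fun h _ => Submodule.smul_mem _ _ ?_
  rw [mem_degreeLT, degree_lt_iff_coeff_zero]
  intro k hk
  rw [coeff_divByMonic_X_pow, coeff_eq_zero_of_natDegree_lt (by omega)]

end CommRing

variable {F : Type*} [Field F]

lemma inverse_mk_X_sub_C {g : F[X]} {a : F} (ha : g.eval a ≠ 0) :
    Ring.inverse (Ideal.Quotient.mk (Ideal.span {g}) (X - C a)) =
      Ideal.Quotient.mk (Ideal.span {g})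
        (C (-(g.eval a)⁻¹) * ∑ h ∈ range g.natDegree, C (a ^ h) * (g /ₘ X ^ (h + 1))) := by
  set π := Ideal.Quotient.mk (Ideal.span {g})
  have hprod : π (X - C a) * π (C (-(g.eval a)⁻¹) *
      ∑ h ∈ range g.natDegree, C (a ^ h) * (g /ₘ X ^ (h + 1))) = 1 := by
    have hg : π g = 0 := Ideal.Quotient.eq_zero_iff_mem.2 (Ideal.mem_span_singleton_self g)
    rw [← map_mul, mul_left_comm, X_sub_C_mul_sum_divByMonic_X_pow, mul_sub, ← C_mul,
      neg_mul, inv_mul_cancel₀ ha, map_sub, map_mul, hg, mul_zero, C_neg, C_1, map_neg, map_one,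
      zero_sub, neg_neg]
  rw [← mul_one (Ring.inverse _), Ring.inverse_mul_eq_iff_eq_mul _ _ _ (.of_mul_eq_one _ hprod),
    hprod]

end Polynomial

section MTGoppa

variable {F : Type*} [Field F] {n L : ℕ} (α : Fin n → F) (g : F[X]) (tw hk : Fin (L + 1) → ℕ)
  (η : Fin (L + 1) → F) (c : Fin n → F)

/-- The coordinates `w_h` of the syndrome of `c` against the `g /ₘ X ^ (h + 1)`: the first part
comes from `Polynomial.inverse_mk_X_sub_C`, the second from the twists. -/
noncomputable def syndromeCoords : ℕ →₀ F :=
  ∑ i, c i • (-(g.eval (α i))⁻¹ • ∑ h ∈ range g.natDegree, Finsupp.single h (α i ^ h) -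
    ∑ j, Finsupp.single (hk j) (η j * α i ^ (g.natDegree - 1 + tw j) / g.eval (α i)))

variable {α g tw hk η c}

lemma syndromeCoords_mem_supported (hhk : ∀ j, hk j < g.natDegree) :
    syndromeCoords α g tw hk η c ∈ Finsupp.supported F F (Set.Iio g.natDegree) := by
  refine Submodule.sum_mem _ fun i _ => Submodule.smul_mem _ _ (Submodule.sub_mem _
    (Submodule.smul_mem _ _ (Submodule.sum_mem _ fun h hh => ?_))
    (Submodule.sum_mem _ fun j _ => Finsupp.single_mem_supported F _ (hhk j)))
  exact Finsupp.single_mem_supported F _ (mem_range.1 hh)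

lemma syndromeCoords_eq_zero_of_mem_MTGoppa {K : Subfield F} (hg : g ≠ 0)
    (hgα : ∀ i, g.eval (α i) ≠ 0) (hhk : ∀ j, hk j < g.natDegree)
    (hc : c ∈ MTGoppa K α g g.natDegree tw hk η) : syndromeCoords α g tw hk η c = 0 := by
  obtain ⟨-, hsyn⟩ := hc
  set Φ := Finsupp.linearCombination F fun h => g /ₘ X ^ (h + 1)
  have hmk : Ideal.Quotient.mk (Ideal.span {g}) (Φ (syndromeCoords α g tw hk η c)) = 0 := by
    rw [← hsyn, syndromeCoords, map_sum, map_sum]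
    refine sum_congr rfl fun i _ => ?_
    rw [inverse_mk_X_sub_C (hgα i)]
    simp [Φ, map_sum, smul_eq_C_mul, Finsupp.linearCombination_single]
  have hdvd : g ∣ Φ (syndromeCoords α g tw hk η c) :=
    Ideal.mem_span_singleton.1 (Ideal.Quotient.eq_zero_iff_mem.1 hmk)
  have hΦ : Φ (syndromeCoords α g tw hk η c) = 0 := by
    refine eq_zero_of_dvd_of_degree_lt hdvd ?_
    rw [degree_eq_natDegree hg]
    exact mem_degreeLT.1 (linearCombination_divByMonic_X_pow_succ_mem_degreeLT g _)
  exact linearIndepOn_iff.1 (linearIndepOn_divByMonic_X_pow_succ hg) _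
    (syndromeCoords_mem_supported hhk) hΦ

lemma linearCombination_coeff_syndromeCoords (hgα : ∀ i, g.eval (α i) ≠ 0)
    (hcond : ∀ k : Fin n, ∑ j, g.coeff (hk j) * η j * α k ^ (g.natDegree - 1 + tw j) =
      g.leadingCoeff * α k ^ g.natDegree) :
    Finsupp.linearCombination F g.coeff (syndromeCoords α g tw hk η c) = -∑ i, c i := by
  simp only [syndromeCoords, map_sum, map_smul, map_sub, Finsupp.linearCombination_single,
    smul_eq_mul]
  rw [← sum_neg_distrib]
  refine sum_congr rfl fun i _ => ?_
  have hpow : ∑ h ∈ range g.natDegree, α i ^ h * g.coeff h =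
      g.eval (α i) - g.leadingCoeff * α i ^ g.natDegree := by
    rw [eval_eq_sum_range, sum_range_succ, leadingCoeff]
    simp only [mul_comm, add_sub_cancel_right]
  have htwist : ∑ j, η j * α i ^ (g.natDegree - 1 + tw j) / g.eval (α i) * g.coeff (hk j) =
      g.leadingCoeff * α i ^ g.natDegree / g.eval (α i) := by
    rw [← hcond i, sum_div]
    exact sum_congr rfl fun j _ => by ring
  rw [hpow, htwist]
  field_simp [hgα i]
  ring

end MTGoppa

theorem stmt2_general {F : Type*} [Field F] (K : Subfield F)
    {n : ℕ} (α : Fin n → F)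
    (g : F[X]) (t : ℕ) (hgdeg : g.natDegree = t)
    (hgt : g.coeff t ≠ 0) (hgα : ∀ i, g.eval (α i) ≠ 0)
    {L : ℕ} (tw hk : Fin (L + 1) → ℕ)
    (hhkt : ∀ j, hk j < t)
    (η : Fin (L + 1) → F)
    (hcond : ∀ k : Fin n,
      ∑ j, g.coeff (hk j) * η j * α k ^ (t - 1 + tw j) = g.coeff t * α k ^ t) :
    (∀ c ∈ MTGoppa K α g t tw hk η, ∑ i, c i = 0) ∧
    {c | c ∈ MTGoppa K α g t tw hk η ∧ ∑ i, c i = 0} = MTGoppa K α g t tw hk η := by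
  subst hgdeg
  have hg : g ≠ 0 := fun h => hgt (by simp [h])
  have hsum (c : Fin n → F) (hc : c ∈ MTGoppa K α g g.natDegree tw hk η) : ∑ i, c i = 0 := by
    rw [← neg_eq_zero, ← linearCombination_coeff_syndromeCoords hgα hcond,
      syndromeCoords_eq_zero_of_mem_MTGoppa hg hgα hhkt hc, map_zero]
  exact ⟨hsum, Set.sep_eq_self_iff_mem_true.2 hsum⟩

/-- if `Σ_j g_{h_j} η_j α_k^{t-1+t_j} = g_t α_k^t` for all `k`, then
every codeword of `Γ(L, g, 𝕥, 𝕙, η)` has coordinate sum zero; consequently the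
expurgated code `Γ̃ = {c ∈ Γ : Σ_i c_i = 0}` coincides with `Γ`. -/
theorem stmt2 {F : Type*} [Field F] [Fintype F] (K : Subfield F)
    {n : ℕ} (α : Fin n → F) (hα : Function.Injective α)
    (g : F[X]) (t : ℕ) (ht : 1 ≤ t) (hgdeg : g.natDegree = t)
    (hgt : g.coeff t ≠ 0) (hgα : ∀ i, g.eval (α i) ≠ 0)
    {L : ℕ} (tw hk : Fin (L + 1) → ℕ)
    (htw1 : ∀ j, 1 ≤ tw j) (htwmono : StrictMono tw)
    (hhkmono : StrictMono hk) (hhkt : ∀ j, hk j < t)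
    (η : Fin (L + 1) → F)
    (hcond : ∀ k : Fin n,
      ∑ j, g.coeff (hk j) * η j * α k ^ (t - 1 + tw j) = g.coeff t * α k ^ t) :
    (∀ c ∈ MTGoppa K α g t tw hk η, ∑ i, c i = 0) ∧
    {c | c ∈ MTGoppa K α g t tw hk η ∧ ∑ i, c i = 0} = MTGoppa K α g t tw hk η :=
  stmt2_general K α g t hgdeg hgt hgα tw hk hhkt η hcond
end

section
/- Let σ̂(x), τ̂(x) ∈ 𝔽_{q^m}[x] with σ̂ monic, satisfying s_π(x)·σ̂(x) ≡ τ̂(x) (mod x^t), gcd(σ̂(x), τ̂(x)) = 1, and deg τ̂(x) ≤ deg σ̂(x) ≤ t/2. Then σ̂(x) = σ(x) and τ̂(x) = τ(x) (the error-locator and error-evaluator polynomials of e) if and only if the following three conditions hold: (a) J = {i : 1 ≤ i ≤ n, σ̂(α_i^{−1}) = 0} and |J| = deg σ̂(x); (b) e_i = −α_i g(α_i) τ̂(α_i^{−1}) / σ̂′(α_i^{−1}) for every i ∈ J, and e_i = 0 for i ∉ J; (c) τ̂(x) = A·σ̂(x) + w(x) for some w(x) ∈ 𝔽_{q^m}[x]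 with deg w(x) < deg σ̂(x), where A := η Σ_{i∈J} α_i^{t−1+t_1} g(α_i)^{−1} e_i. -/
/-!
Everything is read off at the nodes `α_i⁻¹`, `i ∈ J`. A monic polynomial of degree `|J|` vanishing
at all of them is the error locator `σ`. With `c_i = α_i⁻¹ g(α_i)⁻¹ e_i`, the sum in `τ` is
`Σ c_i σ(x) / (x - α_i⁻¹)`, the Lagrange interpolant on the nodes of the values `c_i σ'(α_i⁻¹)`.
So `τ - A σ` has degree `< |J|`, and condition (b) says precisely that `τ̂ - A σ̂` takes the same
values at the nodes; a polynomial of degree `< |J|` is determined by its values at `|J|` nodes.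
-/

open Polynomial

attribute [local instance] Classical.propDecidable

variable {F : Type*} [Field F] {n : ℕ}

/-- The support `J` of an error vector `e`. -/
noncomputable def errSupp (e : Fin n → F) : Finset (Fin n) :=
  Finset.univ.filter fun i => e i ≠ 0

/-- The error-locator polynomial `σ(x) = Π_{i∈J} (x - α_i⁻¹)`. -/
noncomputable def errLoc (α e : Fin n → F) : F[X] :=
  ∏ i ∈ errSupp e, (X - C (α i)⁻¹)

/-- The scalar `A = η Σ_{i∈J} α_i^{t-1+t₁} g(α_i)⁻¹ e_i`. -/
noncomputable def twistScalar (α : Fin n → F) (g : F[X]) (t t₁ : ℕ) (η : F)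
    (e : Fin n → F) : F :=
  η * ∑ i ∈ errSupp e, α i ^ (t - 1 + t₁) * (g.eval (α i))⁻¹ * e i

/-- The error-evaluator polynomial
`τ(x) = A·σ(x) - Σ_{i∈J} α_i⁻¹ g(α_i)⁻¹ e_i Π_{j∈J∖{i}} (x - α_j⁻¹)`. -/
noncomputable def errEval (α : Fin n → F) (g : F[X]) (t t₁ : ℕ) (η : F)
    (e : Fin n → F) : F[X] :=
  C (twistScalar α g t t₁ η e) * errLoc α e -
    ∑ i ∈ errSupp e, C ((α i)⁻¹ * (g.eval (α i))⁻¹ * e i) *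
      ∏ j ∈ (errSupp e).erase i, (X - C (α j)⁻¹)

/-- The transformed syndrome polynomial
`s_π(x) = A + Σ_{i∈J} g(α_i)⁻¹ e_i Σ_{l=0}^{t-1} α_i^l x^l`. -/
noncomputable def synPoly (α : Fin n → F) (g : F[X]) (t t₁ : ℕ) (η : F)
    (e : Fin n → F) : F[X] :=
  C (twistScalar α g t t₁ η e) +
    ∑ i ∈ errSupp e, C ((g.eval (α i))⁻¹ * e i) *
      ∑ l ∈ Finset.range t, C (α i ^ l) * X ^ l

namespace Lagrange

variable {ι : Type*} {s : Finset ι} {v : ι → F}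

theorem eval_nodal_eq_zero_iff (hv : Function.Injective v) (i : ι) :
    (nodal s v).eval (v i) = 0 ↔ i ∈ s := by
  refine ⟨fun h => ?_, eval_nodal_at_node⟩
  by_contra hi
  exact eval_nodal_not_at_node (fun j hj hij => hi (by rwa [hv hij])) h

theorem nodal_dvd_of_eval_eq_zero (hvs : Set.InjOn v s) {p : F[X]}
    (hp : ∀ i ∈ s, p.eval (v i) = 0) : nodal s v ∣ p :=
  Finset.prod_dvd_of_coprime
    (fun _ hi _ hj hij => isCoprime_X_sub_C_of_isUnit_sub
      (sub_ne_zero_of_ne fun h => hij (hvs hi hj h)).isUnit)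
    fun i hi => dvd_iff_isRoot.mpr (hp i hi)

theorem eq_nodal_of_monic_of_eval_eq_zero (hvs : Set.InjOn v s) {p : F[X]} (hp : p.Monic)
    (hdeg : p.natDegree = s.card) (hroot : ∀ i ∈ s, p.eval (v i) = 0) : p = nodal s v :=
  eq_of_monic_of_dvd_of_natDegree_le nodal_monic hp (nodal_dvd_of_eval_eq_zero hvs hroot)
    (by rw [hdeg, natDegree_nodal])

section DecidableEq

variable [DecidableEq ι]

theorem eval_derivative_nodal_ne_zero (hvs : Set.InjOn v s) {i : ι} (hi : i ∈ s) :
    (derivative (nodal s v)).eval (v i) ≠ 0 := by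
  simpa [nodalWeight_eq_eval_derivative_nodal hi] using nodalWeight_ne_zero hvs hi

theorem sum_C_mul_nodal_erase_eq_interpolate (hvs : Set.InjOn v s) (c : ι → F) :
    ∑ i ∈ s, C (c i) * nodal (s.erase i) v =
      interpolate s v fun i => c i * (derivative (nodal s v)).eval (v i) := by
  rw [interpolate_apply]
  refine Finset.sum_congr rfl fun i hi => ?_
  rw [basis_eq_prod_sub_inv_mul_nodal_div hi, ← nodal_erase_eq_nodal_div hi,
    nodalWeight_eq_eval_derivative_nodal hi, ← mul_assoc, ← C_mul,
    mul_inv_cancel_right₀ (eval_derivative_nodal_ne_zero hvs hi)]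

end DecidableEq

end Lagrange

open Lagrange

theorem eq_neg_mul_div_iff {a b d x y : F} (ha : a ≠ 0) (hb : b ≠ 0) (hd : d ≠ 0) :
    x = -(a * b * y / d) ↔ y = -(a⁻¹ * b⁻¹ * x * d) := by
  constructor <;> rintro rfl <;> field_simp

theorem Function.Injective.injOn_inv {ι : Type*} {α : ι → F} (hα : Function.Injective α)
    (s : Set ι) : Set.InjOn (fun i => (α i)⁻¹) s :=
  (inv_injective.comp hα).injOn

theorem errLoc_eq_nodal (α e : Fin n → F) :
    errLoc α e = nodal (errSupp e) fun i => (α i)⁻¹ := rfl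

theorem degree_errLoc (α e : Fin n → F) : (errLoc α e).degree = (errSupp e).card :=
  degree_nodal

section ErrorPolynomials

variable {α : Fin n → F} (hα : Function.Injective α) {e : Fin n → F}
include hα

theorem eval_errLoc_eq_zero_iff (i : Fin n) :
    (errLoc α e).eval (α i)⁻¹ = 0 ↔ i ∈ errSupp e :=
  eval_nodal_eq_zero_iff (inv_injective.comp hα) i

theorem eval_derivative_errLoc_ne_zero {i : Fin n} (hi : i ∈ errSupp e) :
    (derivative (errLoc α e)).eval (α i)⁻¹ ≠ 0 :=
  eval_derivative_nodal_ne_zero (hα.injOn_inv _) hi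

theorem eq_errLoc_of_monic {σ : F[X]} (hσ : σ.Monic) (hdeg : (errSupp e).card = σ.natDegree)
    (hroot : ∀ i ∈ errSupp e, σ.eval (α i)⁻¹ = 0) : σ = errLoc α e :=
  eq_nodal_of_monic_of_eval_eq_zero (hα.injOn_inv _) hσ hdeg.symm hroot

variable (g : F[X]) (t t₁ : ℕ) (η : F)

theorem errEval_eq_sub_interpolate :
    errEval α g t t₁ η e = C (twistScalar α g t t₁ η e) * errLoc α e -
      interpolate (errSupp e) (fun i => (α i)⁻¹) fun i =>
        (α i)⁻¹ * (g.eval (α i))⁻¹ * e i * (derivative (errLoc α e)).eval (α i)⁻¹ := by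
  rw [errEval, errLoc_eq_nodal, ← sum_C_mul_nodal_erase_eq_interpolate (hα.injOn_inv _)]
  rfl

theorem eval_errEval {i : Fin n} (hi : i ∈ errSupp e) :
    (errEval α g t t₁ η e).eval (α i)⁻¹ =
      -((α i)⁻¹ * (g.eval (α i))⁻¹ * e i * (derivative (errLoc α e)).eval (α i)⁻¹) := by
  rw [errEval_eq_sub_interpolate hα, eval_sub, eval_mul, (eval_errLoc_eq_zero_iff hα i).2 hi,
    eval_interpolate_at_node _ (hα.injOn_inv _) hi, mul_zero, zero_sub]

theorem degree_errEval_sub_lt :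
    (errEval α g t t₁ η e - C (twistScalar α g t t₁ η e) * errLoc α e).degree <
      (errLoc α e).degree := by
  rw [errEval_eq_sub_interpolate hα, sub_sub_cancel_left, degree_neg, degree_errLoc]
  exact degree_interpolate_lt _ (hα.injOn_inv _)

theorem eq_errEval_of_eval {τ : F[X]}
    (hdeg : (τ - C (twistScalar α g t t₁ η e) * errLoc α e).degree < (errLoc α e).degree)
    (heval : ∀ i ∈ errSupp e, τ.eval (α i)⁻¹ =
      -((α i)⁻¹ * (g.eval (α i))⁻¹ * e i * (derivative (errLoc α e)).eval (α i)⁻¹)) :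
    τ = errEval α g t t₁ η e := by
  refine eq_of_degree_sub_lt_of_eval_index_eq (errSupp e) (hα.injOn_inv _) ?_ fun i hi => ?_
  · rw [← degree_errLoc,
      ← sub_sub_sub_cancel_right τ _ (C (twistScalar α g t t₁ η e) * errLoc α e)]
    exact (degree_sub_le _ _).trans_lt (max_lt hdeg (degree_errEval_sub_lt hα g t t₁ η))
  · rw [heval i hi, eval_errEval hα g t t₁ η hi]

end ErrorPolynomials

theorem stmt6_general (α : Fin n → F)
    (hα : Function.Injective α) (hα0 : ∀ i, α i ≠ 0)
    (g : F[X]) (t : ℕ)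
    (hgα : ∀ i, g.eval (α i) ≠ 0) (t₁ : ℕ) (η : F)
    (e : Fin n → F)
    (σh τh : F[X]) (hmonic : σh.Monic) :
    (σh = errLoc α e ∧ τh = errEval α g t t₁ η e) ↔
      ((errSupp e = Finset.univ.filter (fun i => σh.eval ((α i)⁻¹) = 0) ∧
          (errSupp e).card = σh.natDegree) ∧
        (∀ i, (i ∈ errSupp e →
            e i = -(α i * g.eval (α i) * τh.eval ((α i)⁻¹) /
              (Polynomial.derivative σh).eval ((α i)⁻¹))) ∧
          (i ∉ errSupp e → e i = 0)) ∧
        (∃ w : F[X], τh = C (twistScalar α g t t₁ η e) * σh + w ∧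
          w.degree < σh.degree)) := by
  have hmagnitude : ∀ i ∈ errSupp e, ∀ y,
      e i = -(α i * g.eval (α i) * y / (derivative (errLoc α e)).eval (α i)⁻¹) ↔
        y = -((α i)⁻¹ * (g.eval (α i))⁻¹ * e i * (derivative (errLoc α e)).eval (α i)⁻¹) :=
    fun i hi _ => eq_neg_mul_div_iff (hα0 i) (hgα i) (eval_derivative_errLoc_ne_zero hα hi)
  constructor
  · rintro ⟨rfl, rfl⟩
    refine ⟨⟨?_, natDegree_nodal.symm⟩,
      fun i => ⟨fun hi => (hmagnitude i hi _).2 (eval_errEval hα g t t₁ η hi),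
        fun hi => by simpa [errSupp] using hi⟩,
      ⟨_, (add_sub_cancel _ _).symm, degree_errEval_sub_lt hα g t t₁ η⟩⟩
    ext i
    simp [eval_errLoc_eq_zero_iff hα]
  · rintro ⟨⟨hzero, hcard⟩, hb, w, rfl, hw⟩
    obtain rfl : σh = errLoc α e :=
      eq_errLoc_of_monic hα hmonic hcard fun i hi => by simpa [hzero] using hi
    exact ⟨rfl, eq_errEval_of_eval hα g t t₁ η (by rwa [add_sub_cancel_left])
      fun i hi => (hmagnitude i hi _).1 ((hb i).1 hi)⟩

/-- characterization of the error-locator / error-evaluator pair.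
Let `σ̂, τ̂` with `σ̂` monic satisfy `s_π σ̂ ≡ τ̂ (mod x^t)`, `gcd(σ̂, τ̂) = 1` and
`deg τ̂ ≤ deg σ̂ ≤ t/2`.  Then `(σ̂, τ̂) = (σ, τ)` iff (a) `J` is the zero set of
`σ̂` at the `α_i⁻¹` and `|J| = deg σ̂`; (b) the error magnitudes are recovered by
the evaluation formula on `J` and vanish off `J`; and (c) `τ̂ = A σ̂ + w` with
`deg w < deg σ̂`. -/
theorem stmt6 [Fintype F] (K : Subfield F) (α : Fin n → F)
    (hα : Function.Injective α) (hα0 : ∀ i, α i ≠ 0)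
    (g : F[X]) (t : ℕ) (ht : 1 ≤ t) (hgdeg : g.natDegree = t)
    (hgα : ∀ i, g.eval (α i) ≠ 0) (t₁ : ℕ) (ht₁ : 1 ≤ t₁) (η : F)
    (e : Fin n → F) (heK : ∀ i, e i ∈ K)
    (hne : (errSupp e).Nonempty)
    (hw : 2 * (errSupp e).card ≤ t)
    (σh τh : F[X]) (hmonic : σh.Monic)
    (hdvd : (X ^ t : F[X]) ∣ synPoly α g t t₁ η e * σh - τh)
    (hcop : IsCoprime σh τh)
    (hdeg1 : τh.natDegree ≤ σh.natDegree)
    (hdeg2 : 2 * σh.natDegree ≤ t) :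
    (σh = errLoc α e ∧ τh = errEval α g t t₁ η e) ↔
      ((errSupp e = Finset.univ.filter (fun i => σh.eval ((α i)⁻¹) = 0) ∧
          (errSupp e).card = σh.natDegree) ∧
        (∀ i, (i ∈ errSupp e →
            e i = -(α i * g.eval (α i) * τh.eval ((α i)⁻¹) /
              (Polynomial.derivative σh).eval ((α i)⁻¹))) ∧
          (i ∉ errSupp e → e i = 0)) ∧
        (∃ w : F[X], τh = C (twistScalar α g t t₁ η e) * σh + w ∧
          w.degree < σh.degree)) :=
  stmt6_general α hα hα0 g t hgα t₁ η e σh τh hmonic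
end

section
/- Let e ≠ 0 be an error vector of Hamming weight |J| ≤ t/2 with transformed syndrome s_π(x) ≠ 0, and let σ(x), τ(x) be its error-locator and error-evaluator polynomials. Apply the extended Euclidean algorithm to G(x) = x^t and S(x) = s_π(x) to obtain sequences σ_i(x), τ_i(x) for i ∈ {−1, 0, …, κ+1}, and let ν := min{i ∈ {0, 1, …, κ+1} : deg τ_i(x) < t/2}. Then: (i) if deg σ_ν(x) < t/2, there exists μ ∈ 𝔽_{q^m} ∖ {0} such that σ(x) = μ σ_ν(x) and τ(x) = μ τ_ν(x); (ii) if t is even and deg σ_ν(x) = t/2, there exist μ_1, μ_2 ∈ 𝔽_{q^m} such that σ(x) = μ_1 σ_{ν−1}(x) + μ_2 σ_ν(x) and τ(x) = μ_1 τ_{ν−1}(x) + μ_2 τ_ν(x). Moreover, the case deg σ_ν(x) > t/2 cannot occur. -/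
open Polynomial

attribute [local instance] Classical.propDecidable

variable {F : Type*} [Field F] {n : ℕ}

/-- Data produced by the extended Euclidean algorithm applied to polynomials
`G` and `S` over a field, with `G ≠ 0` and `deg S < deg G`.  Indices are
shifted by one relative to the paper: `T k`, `U k`, `V k`, `Q k` correspond to
`τ_{k-1}`, `u_{k-1}`, `σ_{k-1}`, `q_{k-1}` respectively, so `T 0 = τ_{-1} = G`,
`T 1 = τ_0 = S`, etc.  `κ` is the largest (paper) index with `τ_κ ≠ 0`, i.e.
`T (κ+1) ≠ 0` and `T (κ+2) = 0`. -/
structure EEAData (F : Type*) [Field F] (G S : Polynomial F) where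
  T : ℕ → Polynomial F
  U : ℕ → Polynomial F
  V : ℕ → Polynomial F
  Q : ℕ → Polynomial F
  κ : ℕ
  hT0 : T 0 = G
  hT1 : T 1 = S
  hU0 : U 0 = 1
  hU1 : U 1 = 0
  hV0 : V 0 = 0
  hV1 : V 1 = 1
  hrec : ∀ k : ℕ, 2 ≤ k → k ≤ κ + 2 →
    T (k - 2) = Q k * T (k - 1) + T k ∧
    (T k).degree < (T (k - 1)).degree ∧
    U k = U (k - 2) - Q k * U (k - 1) ∧
    V k = V (k - 2) - Q k * V (k - 1)
  hκ₁ : T (κ + 1) ≠ 0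
  hκ₂ : T (κ + 2) = 0

/-!
The error locator and evaluator satisfy the key equation `σ · s_π ≡ τ (mod xᵗ)`, are coprime, and
have degrees `deg τ ≤ deg σ ≤ t/2`. The remainders of the Euclidean algorithm satisfy the same
congruence, `τ_k ≡ σ_k · s_π (mod xᵗ)`, and consecutive pairs have determinant `±xᵗ`; hence
`(σ, τ) = a (σ_{ν-1}, τ_{ν-1}) + b (σ_ν, τ_ν)` for polynomials `a, b`, and `xᵗ · a = ±(τ σ_ν - σ τ_ν)`.
Since `deg σ_ν + deg τ_{ν-1} = t` and `deg τ_{ν-1} ≥ t/2 > deg τ_ν`, comparing degrees forces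
`deg σ_ν ≤ t/2`, `a = 0` when `deg σ_ν < t/2`, and `a, b` constant when `deg σ_ν = t/2`;
in the first case coprimality makes `b` a nonzero constant.
-/

theorem exists_eq_add_of_dvd_of_det {R : Type*} [CommRing R] [IsDomain R]
    {G c p₀ p₁ r₀ r₁ σ τ : R} (hG : G ≠ 0) (hc : IsUnit c)
    (hdet : p₀ * r₁ - p₁ * r₀ = c * G)
    (h₀ : G ∣ σ * p₀ - τ * r₀) (h₁ : G ∣ σ * p₁ - τ * r₁) :
    ∃ a b : R, σ = a * r₀ + b * r₁ ∧ τ = a * p₀ + b * p₁ := by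
  obtain ⟨u, rfl⟩ := hc
  obtain ⟨b', hb'⟩ := h₀
  obtain ⟨a', ha'⟩ := h₁
  have hu : (↑u⁻¹ : R) * u = 1 := u.inv_mul
  refine ⟨-(↑u⁻¹ * a'), ↑u⁻¹ * b', mul_left_cancel₀ hG ?_, mul_left_cancel₀ hG ?_⟩
  · linear_combination (↑u⁻¹ * r₁) * hb' - (↑u⁻¹ * r₀) * ha' - (↑u⁻¹ * σ) * hdet
      - (σ * G) * hu
  · linear_combination (↑u⁻¹ * p₁) * hb' - (↑u⁻¹ * p₀) * ha' - (↑u⁻¹ * τ) * hdet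
      - (τ * G) * hu

namespace Polynomial

theorem natDegree_pos_and_add_eq_of_eq_mul_add {R : Type*} [Ring R] [NoZeroDivisors R]
    {a b q r : R[X]} (h : a = q * b + r)
    (hrb : r.degree < b.degree) (hba : b.degree < a.degree) :
    0 < q.natDegree ∧ q.natDegree + b.natDegree = a.natDegree := by
  have hb : b ≠ 0 := ne_zero_of_degree_gt hrb
  have hq : q ≠ 0 := by
    rintro rfl
    rw [zero_mul, zero_add] at h
    exact (hrb.trans (h ▸ hba)).false
  have hqb : (q * b).degree = a.degree := by
    rw [eq_sub_of_add_eq h.symm, degree_sub_eq_left_of_degree_lt (hrb.trans hba)]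
  have hsum : q.natDegree + b.natDegree = a.natDegree := by
    rw [← natDegree_mul hq hb, natDegree_eq_of_degree_eq hqb]
  have hlt : b.natDegree < a.natDegree := natDegree_lt_natDegree hb hba
  exact ⟨by omega, hsum⟩

theorem X_sub_C_inv_mul_geom_sum {a : F} (ha : a ≠ 0) (t : ℕ) :
    (X - C a⁻¹) * ∑ l ∈ Finset.range t, C (a ^ l) * X ^ l = C a⁻¹ * ((C a * X) ^ t - 1) := by
  have hX : X - C a⁻¹ = C a⁻¹ * (C a * X - 1) := by
    rw [mul_sub, ← mul_assoc, ← C_mul, inv_mul_cancel₀ ha, C_1, one_mul, mul_one]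
  simp only [hX, C_pow, ← mul_pow, mul_assoc, mul_geom_sum]

end Polynomial

theorem natDegree_errLoc (α e : Fin n → F) : (errLoc α e).natDegree = (errSupp e).card :=
  natDegree_finsetProd_X_sub_C_eq_card _ _

theorem natDegree_errEval_le (α : Fin n → F) (g : F[X]) (t t₁ : ℕ) (η : F) (e : Fin n → F) :
    (errEval α g t t₁ η e).natDegree ≤ (errSupp e).card := by
  rw [errEval]
  refine (natDegree_sub_le _ _).trans (max_le ?_ ?_)
  · exact (natDegree_C_mul_le _ _).trans (natDegree_errLoc α e).le
  · refine natDegree_sum_le_of_forall_le _ _ fun i _ => (natDegree_C_mul_le _ _).trans ?_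
    rw [natDegree_finsetProd_X_sub_C_eq_card]
    exact Finset.card_erase_le

theorem degree_synPoly_lt (α : Fin n → F) (g : F[X]) {t : ℕ} (ht : 1 ≤ t) (t₁ : ℕ) (η : F)
    (e : Fin n → F) : (synPoly α g t t₁ η e).degree < t := by
  rw [← mem_degreeLT, synPoly]
  refine add_mem ?_ (Submodule.sum_mem _ fun i _ => ?_)
  · rw [mem_degreeLT]
    exact degree_C_le.trans_lt (by exact_mod_cast ht)
  · rw [← smul_eq_C_mul]
    refine Submodule.smul_mem _ _ (Submodule.sum_mem _ fun l hl => ?_)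
    rw [mem_degreeLT]
    exact (degree_C_mul_X_pow_le _ _).trans_lt (by exact_mod_cast Finset.mem_range.mp hl)

theorem X_pow_dvd_errLoc_mul_synPoly_sub_errEval (α : Fin n → F) (hα0 : ∀ i, α i ≠ 0)
    (g : F[X]) (t t₁ : ℕ) (η : F) (e : Fin n → F) :
    X ^ t ∣ errLoc α e * synPoly α g t t₁ η e - errEval α g t t₁ η e := by
  have hsplit : errLoc α e * synPoly α g t t₁ η e - errEval α g t t₁ η e =
      ∑ i ∈ errSupp e, (errLoc α e * (C ((g.eval (α i))⁻¹ * e i) *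
          ∑ l ∈ Finset.range t, C (α i ^ l) * X ^ l) +
        C ((α i)⁻¹ * (g.eval (α i))⁻¹ * e i) * ∏ j ∈ (errSupp e).erase i, (X - C (α j)⁻¹)) := by
    rw [synPoly, errEval, Finset.sum_add_distrib, ← Finset.mul_sum]
    ring
  rw [hsplit]
  refine Finset.dvd_sum fun i hi => ?_
  have hgeom := X_sub_C_inv_mul_geom_sum (hα0 i) t
  rw [errLoc, ← Finset.mul_prod_erase _ _ hi]
  refine ⟨C ((g.eval (α i))⁻¹ * e i * (α i)⁻¹ * α i ^ t) *
    ∏ j ∈ (errSupp e).erase i, (X - C (α j)⁻¹), ?_⟩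
  simp only [C_mul, C_pow] at hgeom ⊢
  linear_combination (C (g.eval (α i))⁻¹ * C (e i) *
    ∏ j ∈ (errSupp e).erase i, (X - C (α j)⁻¹)) * hgeom

theorem eval_errEval_inv_ne_zero (α : Fin n → F) (hα : Function.Injective α)
    (hα0 : ∀ i, α i ≠ 0) (g : F[X]) (hgα : ∀ i, g.eval (α i) ≠ 0) (t t₁ : ℕ) (η : F)
    (e : Fin n → F) {i : Fin n} (hi : i ∈ errSupp e) :
    (errEval α g t t₁ η e).eval (α i)⁻¹ ≠ 0 := by
  have hroot : ∀ k ∈ errSupp e, k ≠ i →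
      ∏ j ∈ (errSupp e).erase k, ((α i)⁻¹ - (α j)⁻¹) = 0 := fun k _ hki =>
    Finset.prod_eq_zero (Finset.mem_erase.mpr ⟨hki.symm, hi⟩) (sub_self _)
  have hprod : ∏ j ∈ (errSupp e).erase i, ((α i)⁻¹ - (α j)⁻¹) ≠ 0 :=
    Finset.prod_ne_zero_iff.mpr fun j hj => sub_ne_zero.mpr fun h =>
      (Finset.mem_erase.mp hj).1 (hα (inv_injective h)).symm
  have he : e i ≠ 0 := (Finset.mem_filter.mp hi).2
  have hloc : (errLoc α e).eval (α i)⁻¹ = 0 := by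
    rw [errLoc, eval_prod]
    exact Finset.prod_eq_zero hi (by simp)
  rw [errEval, eval_sub, eval_mul, hloc, mul_zero, zero_sub, neg_ne_zero, eval_finsetSum,
    Finset.sum_eq_single_of_mem i hi fun k hk hki => ?_]
  · simp only [eval_mul, eval_C, eval_prod, eval_sub, eval_X]
    exact mul_ne_zero (by simp [hα0 i, hgα i, he]) hprod
  · simp only [eval_mul, eval_C, eval_prod, eval_sub, eval_X, hroot k hk hki, mul_zero]

theorem isCoprime_errLoc_errEval (α : Fin n → F) (hα : Function.Injective α)
    (hα0 : ∀ i, α i ≠ 0) (g : F[X]) (hgα : ∀ i, g.eval (α i) ≠ 0) (t t₁ : ℕ) (η : F)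
    (e : Fin n → F) : IsCoprime (errLoc α e) (errEval α g t t₁ η e) :=
  IsCoprime.prod_left fun _ hi => (irreducible_X_sub_C _).coprime_iff_not_dvd.mpr fun h =>
    eval_errEval_inv_ne_zero α hα hα0 g hgα t t₁ η e hi (dvd_iff_isRoot.mp h)

namespace EEAData

variable {G S : F[X]} (E : EEAData F G S)

theorem rec_add_two {k : ℕ} (hk : k ≤ E.κ) :
    E.T k = E.Q (k + 2) * E.T (k + 1) + E.T (k + 2) ∧
      (E.T (k + 2)).degree < (E.T (k + 1)).degree ∧
      E.U (k + 2) = E.U k - E.Q (k + 2) * E.U (k + 1) ∧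
      E.V (k + 2) = E.V k - E.Q (k + 2) * E.V (k + 1) := by
  simpa using E.hrec (k + 2) (by omega) (by omega)

theorem degree_T_succ_lt (hS : S.degree < G.degree) {k : ℕ} (hk : k ≤ E.κ + 1) :
    (E.T (k + 1)).degree < (E.T k).degree := by
  cases k with
  | zero => rwa [E.hT0, E.hT1]
  | succ k => exact (E.rec_add_two (by omega)).2.1

theorem dvd_T_sub_V_mul {k : ℕ} (hk : k ≤ E.κ + 2) : G ∣ E.T k - E.V k * S := by
  induction k using Nat.twoStepInduction with
  | zero => simp [E.hT0, E.hV0]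
  | one => simp [E.hT1, E.hV1]
  | more k ih₀ ih₁ =>
    obtain ⟨hT, -, -, hV⟩ := E.rec_add_two (k := k) (by omega)
    have h : E.T (k + 2) - E.V (k + 2) * S =
        (E.T k - E.V k * S) - E.Q (k + 2) * (E.T (k + 1) - E.V (k + 1) * S) := by
      rw [hV, hT]; ring
    rw [h]
    exact dvd_sub (ih₀ (by omega)) (dvd_mul_of_dvd_right (ih₁ (by omega)) _)

theorem T_mul_V_succ_sub {k : ℕ} (hk : k ≤ E.κ + 1) :
    E.T k * E.V (k + 1) - E.T (k + 1) * E.V k = (-1) ^ k * G := by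
  induction k with
  | zero => simp [E.hT0, E.hV0, E.hV1]
  | succ k ih =>
    obtain ⟨hT, -, -, hV⟩ := E.rec_add_two (k := k) (by omega)
    rw [hV, pow_succ]
    linear_combination (-1 : F[X]) * ih (by omega) + E.V (k + 1) * hT

theorem natDegree_V_succ (hS : S.degree < G.degree) {k : ℕ} (hk : k ≤ E.κ + 1) :
    E.V (k + 1) ≠ 0 ∧ (E.V (k + 1)).natDegree + (E.T k).natDegree = G.natDegree ∧
      (E.V k).natDegree ≤ (E.V (k + 1)).natDegree := by
  induction k with
  | zero => simp [E.hV0, E.hV1, E.hT0]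
  | succ k ih =>
    rw [show k + 1 + 1 = k + 2 from rfl]
    obtain ⟨hVne, hVT, hVle⟩ := ih (by omega)
    obtain ⟨hT, hT₂, -, hV⟩ := E.rec_add_two (k := k) (by omega)
    obtain ⟨hQpos, hQT⟩ := natDegree_pos_and_add_eq_of_eq_mul_add hT hT₂
      (E.degree_T_succ_lt hS (by omega))
    have hQV : (E.Q (k + 2) * E.V (k + 1)).natDegree =
        (E.Q (k + 2)).natDegree + (E.V (k + 1)).natDegree :=
      natDegree_mul (by rintro h; simp [h] at hQpos) hVne
    have hV₂ : (E.V (k + 2)).natDegree = (E.Q (k + 2)).natDegree + (E.V (k + 1)).natDegree := by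
      rw [hV, natDegree_sub_eq_right_of_natDegree_lt (by omega), hQV]
    exact ⟨fun h => by rw [h, natDegree_zero] at hV₂; omega, by omega, by omega⟩

theorem exists_eq_succ_of_least {N : ℕ} (hNlt : 2 * (E.T N).natDegree < G.natDegree)
    (hNleast : ∀ k < N, ¬ 2 * (E.T k).natDegree < G.natDegree) :
    ∃ M, N = M + 1 ∧ M ≤ E.κ + 1 ∧ G.natDegree ≤ 2 * (E.T M).natDegree := by
  obtain _ | M := N
  · rw [E.hT0] at hNlt
    omega
  · refine ⟨M, rfl, ?_, not_lt.mp (hNleast M M.lt_succ_self)⟩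
    by_contra! hM
    have h := hNleast (E.κ + 2) (by omega)
    rw [E.hκ₂, natDegree_zero] at h
    omega

theorem two_mul_natDegree_V_le_of_least (hS : S.degree < G.degree) {N : ℕ}
    (hNlt : 2 * (E.T N).natDegree < G.natDegree)
    (hNleast : ∀ k < N, ¬ 2 * (E.T k).natDegree < G.natDegree) :
    2 * (E.V N).natDegree ≤ G.natDegree := by
  obtain ⟨M, rfl, hM, hTM⟩ := E.exists_eq_succ_of_least hNlt hNleast
  have := (E.natDegree_V_succ hS hM).2.1
  omega

theorem exists_eq_add_of_dvd (hG : G ≠ 0) {σ τ : F[X]} (hkey : G ∣ σ * S - τ)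
    {M : ℕ} (hM : M ≤ E.κ + 1) :
    ∃ a b : F[X], σ = a * E.V M + b * E.V (M + 1) ∧ τ = a * E.T M + b * E.T (M + 1) := by
  have hdvd : ∀ k ≤ E.κ + 2, G ∣ σ * E.T k - τ * E.V k := fun k hk => by
    rw [show σ * E.T k - τ * E.V k = σ * (E.T k - E.V k * S) + E.V k * (σ * S - τ) by ring]
    exact dvd_add (dvd_mul_of_dvd_right (E.dvd_T_sub_V_mul hk) _) (dvd_mul_of_dvd_right hkey _)
  exact exists_eq_add_of_dvd_of_det hG (isUnit_neg_one.pow M)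
    (E.T_mul_V_succ_sub hM) (hdvd M (by omega)) (hdvd (M + 1) (by omega))

theorem natDegree_add_le_of_eq_add (hG : G ≠ 0) {M : ℕ} (hM : M ≤ E.κ + 1)
    (hTM : 2 * (E.T (M + 1)).natDegree < G.natDegree) {σ τ a b : F[X]}
    (hσ : 2 * σ.natDegree ≤ G.natDegree) (hτ : τ.natDegree ≤ σ.natDegree)
    (hσab : σ = a * E.V M + b * E.V (M + 1)) (hτab : τ = a * E.T M + b * E.T (M + 1))
    (ha : a ≠ 0) :
    a.natDegree + G.natDegree ≤ σ.natDegree + (E.V (M + 1)).natDegree := by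
  have hsq : ((-1) ^ M * (-1) ^ M : F[X]) = 1 := by rw [← mul_pow]; simp
  have haG : a * G = (-1) ^ M * (τ * E.V (M + 1) - σ * E.T (M + 1)) := by
    rw [hσab, hτab]
    linear_combination (-(-1) ^ M * a) * E.T_mul_V_succ_sub hM - (a * G) * hsq
  have hle : a.natDegree + G.natDegree ≤
      max (τ.natDegree + (E.V (M + 1)).natDegree) (σ.natDegree + (E.T (M + 1)).natDegree) :=
    calc a.natDegree + G.natDegree = (a * G).natDegree :=
          (natDegree_mul ha hG).symm
      _ = (τ * E.V (M + 1) - σ * E.T (M + 1)).natDegree := by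
          rw [haG]
          rcases neg_one_pow_eq_or F[X] M with h | h <;>
            simp only [h, one_mul, neg_one_mul, natDegree_neg]
      _ ≤ _ := (natDegree_sub_le _ _).trans (max_le_max natDegree_mul_le natDegree_mul_le)
  omega

theorem exists_eq_C_mul_of_least (hG : G ≠ 0) {σ τ : F[X]}
    (hkey : G ∣ σ * S - τ) (hcop : IsCoprime σ τ)
    (hσ : 2 * σ.natDegree ≤ G.natDegree) (hτ : τ.natDegree ≤ σ.natDegree) {N : ℕ}
    (hNlt : 2 * (E.T N).natDegree < G.natDegree)
    (hNleast : ∀ k < N, ¬ 2 * (E.T k).natDegree < G.natDegree)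
    (hV : 2 * (E.V N).natDegree < G.natDegree) :
    ∃ μ : F, μ ≠ 0 ∧ σ = C μ * E.V N ∧ τ = C μ * E.T N := by
  obtain ⟨M, rfl, hM, -⟩ := E.exists_eq_succ_of_least hNlt hNleast
  obtain ⟨a, b, hσab, hτab⟩ := E.exists_eq_add_of_dvd hG hkey hM
  obtain rfl : a = 0 := by
    by_contra ha
    have := E.natDegree_add_le_of_eq_add hG hM hNlt hσ hτ hσab hτab ha
    omega
  simp only [zero_mul, zero_add] at hσab hτab
  obtain ⟨μ, hμ, rfl⟩ := isUnit_iff.mp (hcop.isUnit_of_dvd' ⟨_, hσab⟩ ⟨_, hτab⟩)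
  exact ⟨μ, hμ.ne_zero, hσab, hτab⟩

theorem exists_eq_C_mul_add_C_mul_of_least (hS : S.degree < G.degree) {σ τ : F[X]}
    (hkey : G ∣ σ * S - τ) (hσ : 2 * σ.natDegree ≤ G.natDegree)
    (hτ : τ.natDegree ≤ σ.natDegree) {N : ℕ}
    (hNlt : 2 * (E.T N).natDegree < G.natDegree)
    (hNleast : ∀ k < N, ¬ 2 * (E.T k).natDegree < G.natDegree)
    (hV : 2 * (E.V N).natDegree = G.natDegree) :
    ∃ μ₁ μ₂ : F, σ = C μ₁ * E.V (N - 1) + C μ₂ * E.V N ∧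
      τ = C μ₁ * E.T (N - 1) + C μ₂ * E.T N := by
  have hG₀ : G ≠ 0 := ne_zero_of_degree_gt hS
  obtain ⟨M, rfl, hM, -⟩ := E.exists_eq_succ_of_least hNlt hNleast
  obtain ⟨a, b, hσab, hτab⟩ := E.exists_eq_add_of_dvd hG₀ hkey hM
  obtain ⟨hVne, -, hVle⟩ := E.natDegree_V_succ hS hM
  have ha : a.natDegree = 0 := by
    by_cases ha : a = 0
    · simp [ha]
    · have := E.natDegree_add_le_of_eq_add hG₀ hM hNlt hσ hτ hσab hτab ha
      omega
  have hb : b.natDegree = 0 := by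
    by_cases hb : b = 0
    · simp [hb]
    have hbV : b * E.V (M + 1) = σ - a * E.V M := by rw [hσab]; ring
    have : b.natDegree + (E.V (M + 1)).natDegree ≤
        max σ.natDegree (a.natDegree + (E.V M).natDegree) := by
      rw [← natDegree_mul hb hVne, hbV]
      exact (natDegree_sub_le _ _).trans (max_le_max le_rfl natDegree_mul_le)
    omega
  rw [eq_C_of_natDegree_eq_zero ha, eq_C_of_natDegree_eq_zero hb] at hσab hτab
  exact ⟨_, _, hσab, hτab⟩

end EEAData

theorem stmt11_general (α : Fin n → F)
    (hα : Function.Injective α) (hα0 : ∀ i, α i ≠ 0)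
    (g : F[X]) (t : ℕ) (ht : 1 ≤ t)
    (hgα : ∀ i, g.eval (α i) ≠ 0) (t₁ : ℕ) (η : F)
    (e : Fin n → F)
    (hw : 2 * (errSupp e).card ≤ t)
    (E : EEAData F (X ^ t) (synPoly α g t t₁ η e))
    (N : ℕ)
    (hNlt : 2 * (E.T N).natDegree < t)
    (hNleast : ∀ k < N, ¬ 2 * (E.T k).natDegree < t) :
    (2 * (E.V N).natDegree < t →
      ∃ μ : F, μ ≠ 0 ∧ errLoc α e = C μ * E.V N ∧
        errEval α g t t₁ η e = C μ * E.T N) ∧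
    (Even t → 2 * (E.V N).natDegree = t →
      ∃ μ₁ μ₂ : F,
        errLoc α e = C μ₁ * E.V (N - 1) + C μ₂ * E.V N ∧
        errEval α g t t₁ η e = C μ₁ * E.T (N - 1) + C μ₂ * E.T N) ∧
    ¬ t < 2 * (E.V N).natDegree := by
  have hG : (X ^ t : F[X]).natDegree = t := natDegree_X_pow t
  have hS : (synPoly α g t t₁ η e).degree < (X ^ t : F[X]).degree := by
    rw [degree_X_pow]
    exact degree_synPoly_lt α g ht t₁ η e
  have hkey := X_pow_dvd_errLoc_mul_synPoly_sub_errEval α hα0 g t t₁ η e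
  have hσ : 2 * (errLoc α e).natDegree ≤ (X ^ t : F[X]).natDegree := by
    rwa [natDegree_errLoc, hG]
  have hτ := (natDegree_errEval_le α g t t₁ η e).trans (natDegree_errLoc α e).ge
  have hNlt' : 2 * (E.T N).natDegree < (X ^ t : F[X]).natDegree := by rwa [hG]
  have hNleast' : ∀ k < N, ¬ 2 * (E.T k).natDegree < (X ^ t : F[X]).natDegree := by rwa [hG]
  refine ⟨fun hV => ?_, fun _ hV => ?_, not_lt.mpr ?_⟩
  · exact E.exists_eq_C_mul_of_least (pow_ne_zero t X_ne_zero) hkey (isCoprime_errLoc_errEval α hα hα0 g hgα t t₁ η e)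
      hσ hτ hNlt' hNleast' (hV.trans_eq hG.symm)
  · exact E.exists_eq_C_mul_add_C_mul_of_least hS hkey hσ hτ hNlt' hNleast' (hV.trans hG.symm)
  · exact (E.two_mul_natDegree_V_le_of_least hS hNlt' hNleast').trans_eq hG

/-- decoding via the extended Euclidean algorithm.  Apply the EEA
to `G = x^t`, `S = s_π`, and let `N` be the least (shifted) index with
`deg τ_N < t/2` (encoded as `2 * deg (T N) < t`).  Then:
(i) if `deg σ_N < t/2` there is a nonzero `μ` with `σ = μ σ_N`, `τ = μ τ_N`;
(ii) if `t` is even and `deg σ_N = t/2` there are `μ₁, μ₂` with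
`σ = μ₁ σ_{N-1} + μ₂ σ_N` and `τ = μ₁ τ_{N-1} + μ₂ τ_N`;
(iii) the case `deg σ_N > t/2` cannot occur. -/
theorem stmt11 [Fintype F] (K : Subfield F) (α : Fin n → F)
    (hα : Function.Injective α) (hα0 : ∀ i, α i ≠ 0)
    (g : F[X]) (t : ℕ) (ht : 1 ≤ t) (hgdeg : g.natDegree = t)
    (hgα : ∀ i, g.eval (α i) ≠ 0) (t₁ : ℕ) (ht₁ : 1 ≤ t₁) (η : F)
    (e : Fin n → F) (heK : ∀ i, e i ∈ K) (he : e ≠ 0)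
    (hw : 2 * (errSupp e).card ≤ t)
    (hsπ : synPoly α g t t₁ η e ≠ 0)
    (E : EEAData F (X ^ t) (synPoly α g t t₁ η e))
    (N : ℕ)
    (hNlt : 2 * (E.T N).natDegree < t)
    (hNleast : ∀ k < N, ¬ 2 * (E.T k).natDegree < t) :
    (2 * (E.V N).natDegree < t →
      ∃ μ : F, μ ≠ 0 ∧ errLoc α e = C μ * E.V N ∧
        errEval α g t t₁ η e = C μ * E.T N) ∧
    (Even t → 2 * (E.V N).natDegree = t →
      ∃ μ₁ μ₂ : F,
        errLoc α e = C μ₁ * E.V (N - 1) + C μ₂ * E.V N ∧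
        errEval α g t t₁ η e = C μ₁ * E.T (N - 1) + C μ₂ * E.T N) ∧
    ¬ t < 2 * (E.V N).natDegree :=
  stmt11_general α hα hα0 g t ht hgα t₁ η e hw E N hNlt hNleast
end
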